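/- arXiv:2410.03948 — 3 statements merged into one kernel-verified Lean document; each statement's English description precedes it below -/
import Mathlib

section
/- Let q = 2^D and B ≤ D be positive integers. For any integer k with 0 ≤ k < 2^B and any integer e with -q/2^(B+1) ≤ e < q/2^(B+1), decoding the encoded value with added error recovers k: ⌊(ec(k)+e)·2^B/q⌉ mod 2^B = k, where ec(k) = k·q/2^B. -/
section Round

variable {α : Type*} [Field α] [LinearOrder α] [IsStrictOrderedRing α] [FloorRing α]

theorem round_intCast_add_eq (k : ℤ) {x : α} (hx₁ : -(1 / 2) ≤ x) (hx₂ : x < 1 / 2) :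
    round ((k : α) + x) = k := by
  rw [add_comm, round_add_intCast, round_eq_zero_iff.mpr ⟨hx₁, hx₂⟩, zero_add]

theorem round_intCast_mul_add_div_eq (k : ℤ) {s e : α} (hs : 0 < s)
    (he₁ : -(s / 2) ≤ e) (he₂ : e < s / 2) :
    round (((k : α) * s + e) / s) = k := by
  rw [add_div, mul_div_cancel_right₀ _ hs.ne']
  apply round_intCast_add_eq
  · rw [le_div_iff₀ hs]; linarith
  · rw [div_lt_iff₀ hs]; linarith

end Round

theorem frodo_decode_encode_general (D B : ℕ) (hBD : B ≤ D) (k e : ℤ)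
    (hk0 : 0 ≤ k) (hk : k < 2 ^ B)
    (he1 : -((2 : ℚ) ^ D / 2 ^ (B + 1)) ≤ (e : ℚ))
    (he2 : (e : ℚ) < (2 : ℚ) ^ D / 2 ^ (B + 1)) :
    round ((((k * 2 ^ (D - B) + e : ℤ) : ℚ) * 2 ^ B) / 2 ^ D) % 2 ^ B = k := by
  have hq : (2 : ℚ) ^ D = 2 ^ (D - B) * 2 ^ B := by rw [← pow_add, Nat.sub_add_cancel hBD]
  have hhalf : (2 : ℚ) ^ D / 2 ^ (B + 1) = 2 ^ (D - B) / 2 := by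
    rw [hq, pow_succ', mul_div_mul_right _ _ (by positivity : (2 : ℚ) ^ B ≠ 0)]
  rw [hhalf] at he1 he2
  rw [hq, mul_div_mul_right _ _ (by positivity), Int.cast_add, Int.cast_mul, Int.cast_pow,
    Int.cast_ofNat, round_intCast_mul_add_div_eq k (by positivity) he1 he2,
    Int.emod_eq_of_lt hk0 hk]

/-- Frodo encode/decode correctness: with `q = 2^D`, `ec k = k * 2^(D-B)` and
`dc c = round (c * 2^B / q) mod 2^B`, any error `e` with
`-q/2^(B+1) ≤ e < q/2^(B+1)` is tolerated. -/
theorem frodo_decode_encode (D B : ℕ) (hB : 0 < B) (hBD : B ≤ D) (k e : ℤ)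
    (hk0 : 0 ≤ k) (hk : k < 2 ^ B)
    (he1 : -((2 : ℚ) ^ D / 2 ^ (B + 1)) ≤ (e : ℚ))
    (he2 : (e : ℚ) < (2 : ℚ) ^ D / 2 ^ (B + 1)) :
    round ((((k * 2 ^ (D - B) + e : ℤ) : ℚ) * 2 ^ B) / 2 ^ D) % 2 ^ B = k :=
  frodo_decode_encode_general D B hBD k e hk0 hk he1 he2
end

section
/- Correctness error bound of the Frodo-based UE update: suppose all entries of Ord(C_{e,1}) lie in {0,1}, the matrices S'_{(1)} ∈ Z^{nD×n}, E'_{(1)} ∈ Z^{nD×n}, E''_{(1)} ∈ Z^{nD×n̄}, S'_{(2)}, E'_{(2)} ∈ Z^{n×n}, R ∈ Z^{m̄×n}, E''_{(2)} ∈ Z^{n×n̄}, E ∈ Z^{n×n̄}, S_{e+1} ∈ Z^{n×n̄} all have entries in [-s,s]. Then the matrix Error = (Ord(C_{e,1})·S'_{(1)} + R·S'_{(2)})·E − (Ord(C_{e,1})·E'_{(1)} + R·E'_{(2)})·S_{e+1} + Ord(C_{e,1})·E''_{(1)} + R·E''_{(2)} satisfies ‖Error‖_max ≤ 2(n²Ds²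 + n²s³) + nDs + ns². -/
private lemma mul_entry_bound {m k p : ℕ}
    (A : Matrix (Fin m) (Fin k) ℤ) (B : Matrix (Fin k) (Fin p) ℤ)
    (a b : ℤ)
    (ha : ∀ i j, |A i j| ≤ a) (hb : ∀ i j, |B i j| ≤ b) :
    ∀ i j, |(A * B) i j| ≤ (k : ℤ) * (a * b) := by
  intro i j
  rcases Nat.eq_zero_or_pos k with hk | hk
  · subst hk
    simp [Matrix.mul_apply]
  · have h0a : 0 ≤ a := le_trans (abs_nonneg _) (ha i ⟨0, hk⟩)
    have h0b : 0 ≤ b := le_trans (abs_nonneg _) (hb ⟨0, hk⟩ j)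
    rw [Matrix.mul_apply]
    calc |∑ x, A i x * B x j| ≤ ∑ x, |A i x * B x j| := Finset.abs_sum_le_sum_abs _ _
      _ ≤ ∑ _x : Fin k, a * b := by
          refine Finset.sum_le_sum fun x _ => ?_
          rw [abs_mul]
          exact mul_le_mul (ha i x) (hb x j) (abs_nonneg _) h0a
      _ = (k : ℤ) * (a * b) := by simp [Finset.sum_const, mul_comm]

/-- Correctness error bound of the Frodo-based UE update:
`‖Error‖_max ≤ 2(n²Ds² + n²s³) + nDs + ns²`. -/
theorem ue_update_error_bound (n D mb nb s : ℕ)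
    (O : Matrix (Fin mb) (Fin (n * D)) ℤ)
    (S1 E1 : Matrix (Fin (n * D)) (Fin n) ℤ)
    (E1'' : Matrix (Fin (n * D)) (Fin nb) ℤ)
    (S2 E2 : Matrix (Fin n) (Fin n) ℤ)
    (E2'' : Matrix (Fin n) (Fin nb) ℤ)
    (R : Matrix (Fin mb) (Fin n) ℤ)
    (E : Matrix (Fin n) (Fin nb) ℤ)
    (Se1 : Matrix (Fin n) (Fin nb) ℤ)
    (hO : ∀ i j, O i j = 0 ∨ O i j = 1)
    (hS1 : ∀ i j, |S1 i j| ≤ (s : ℤ)) (hE1 : ∀ i j, |E1 i j| ≤ (s : ℤ))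
    (hE1'' : ∀ i j, |E1'' i j| ≤ (s : ℤ))
    (hS2 : ∀ i j, |S2 i j| ≤ (s : ℤ)) (hE2 : ∀ i j, |E2 i j| ≤ (s : ℤ))
    (hE2'' : ∀ i j, |E2'' i j| ≤ (s : ℤ))
    (hR : ∀ i j, |R i j| ≤ (s : ℤ))
    (hE : ∀ i j, |E i j| ≤ (s : ℤ))
    (hSe1 : ∀ i j, |Se1 i j| ≤ (s : ℤ)) :
    ∀ i j,
      |((O * S1 + R * S2) * E - (O * E1 + R * E2) * Se1
          + O * E1'' + R * E2'') i j|
        ≤ 2 * ((n : ℤ) ^ 2 * D * s ^ 2 + (n : ℤ) ^ 2 * s ^ 3)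
            + (n : ℤ) * D * s + (n : ℤ) * s ^ 2 := by
  intro i j
  have hO' : ∀ i j, |O i j| ≤ (1 : ℤ) := fun i j => by
    rcases hO i j with h | h <;> simp [h]
  have hX : ∀ i j, |(O * S1 + R * S2) i j| ≤ (n : ℤ) * D * s + (n : ℤ) * s ^ 2 := by
    intro i j
    have h1 := mul_entry_bound O S1 1 s hO' hS1 i j
    have h2 := mul_entry_bound R S2 s s hR hS2 i j
    calc |(O * S1 + R * S2) i j| = |(O * S1) i j + (R * S2) i j| := by
          simp [Matrix.add_apply]
      _ ≤ |(O * S1) i j| + |(R * S2) i j| := abs_add_le _ _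
      _ ≤ (n : ℤ) * D * s + (n : ℤ) * s ^ 2 := by
          push_cast at h1 h2 ⊢; nlinarith
  have hY : ∀ i j, |(O * E1 + R * E2) i j| ≤ (n : ℤ) * D * s + (n : ℤ) * s ^ 2 := by
    intro i j
    have h1 := mul_entry_bound O E1 1 s hO' hE1 i j
    have h2 := mul_entry_bound R E2 s s hR hE2 i j
    calc |(O * E1 + R * E2) i j| = |(O * E1) i j + (R * E2) i j| := by
          simp [Matrix.add_apply]
      _ ≤ |(O * E1) i j| + |(R * E2) i j| := abs_add_le _ _
      _ ≤ (n : ℤ) * D * s + (n : ℤ) * s ^ 2 := by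
          push_cast at h1 h2 ⊢; nlinarith
  have hXE := mul_entry_bound (O * S1 + R * S2) E _ s hX hE i j
  have hYS := mul_entry_bound (O * E1 + R * E2) Se1 _ s hY hSe1 i j
  have hOE'' := mul_entry_bound O E1'' 1 s hO' hE1'' i j
  have hRE'' := mul_entry_bound R E2'' s s hR hE2'' i j
  have tri : |((O * S1 + R * S2) * E - (O * E1 + R * E2) * Se1
      + O * E1'' + R * E2'') i j|
      ≤ |((O * S1 + R * S2) * E) i j| + |((O * E1 + R * E2) * Se1) i j|
        + |(O * E1'') i j| + |(R * E2'') i j| := by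
    simp only [Matrix.add_apply, Matrix.sub_apply]
    calc |((O * S1 + R * S2) * E) i j - ((O * E1 + R * E2) * Se1) i j
          + (O * E1'') i j + (R * E2'') i j|
        ≤ |((O * S1 + R * S2) * E) i j - ((O * E1 + R * E2) * Se1) i j
          + (O * E1'') i j| + |(R * E2'') i j| := abs_add_le _ _
      _ ≤ |((O * S1 + R * S2) * E) i j - ((O * E1 + R * E2) * Se1) i j|
          + |(O * E1'') i j| + |(R * E2'') i j| := by
            have := abs_add_le (((O * S1 + R * S2) * E) i j - ((O * E1 + R * E2) * Se1) i j) ((O * E1'') i j)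
            linarith
      _ ≤ _ := by
            have := abs_sub (((O * S1 + R * S2) * E) i j) (((O * E1 + R * E2) * Se1) i j)
            linarith
  push_cast at hXE hYS hOE'' hRE'' tri ⊢
  nlinarith
end

section
/- Update invariance of decryption up to error: with ct_e = (C_{e,1}, C_{e,2}) and the updated ciphertext ct_{e+1} = (C₁^{(1)}+C₁^{(2)}, C_{e,2}+C₂^{(1)}+C₂^{(2)}) defined by C₁^{(1)} = Ord(C_{e,1})·(S'_{(1)}·A + E'_{(1)}), C₂^{(1)} = Ord(C_{e,1})·(S'_{(1)}·B_{e+1} + E''_{(1)} − ⊗_D(S_e)), C₁^{(2)} = R·(S'_{(2)}·A + E'_{(2)}), C₂^{(2)} = R·(S'_{(2)}·B_{e+1} + E''_{(2)}), and B_{e+1} = A·S_{e+1} + E, the following identity holds over Z_q: C_{e+1,2} − C_{e+1,1}·S_{e+1} = C_{e,2} − C_{e,1}·S_e + Error, where Error = (Ord(C_{e,1})·S'_{(1)} + R·S'_{(2)})·E − (Ord(C_{e,1})·E'_{(1)} + R·E'_{(2)})·S_{e+1} + Ord(C_{e,1})·E''_{(1)} + R·E''_{(2)}. -/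
/-!
Substituting `B_{e+1} = A·S_{e+1} + E`, the terms `S'·A·S_{e+1}` cancel against the first
component and what survives is linear noise, except for `Ord(C_{e,1})·⊗_D(S_e)`. That product
is `C_{e,1}·S_e` because each entry of `C_{e,1}`, read as a number below `q ≤ 2^D`, equals the
sum of its bits weighted by powers of two.
-/

open Finset

theorem Nat.sum_range_testBit_mul_two_pow (x D : ℕ) :
    ∑ i ∈ range D, (x.testBit i).toNat * 2 ^ i = x % 2 ^ D := by
  induction D with
  | zero => simp [Nat.mod_one]
  | succ D ih => rw [sum_range_succ, ih, Nat.mod_pow_succ, Nat.toNat_testBit]; ring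

theorem ZMod.sum_testBit_val_mul_two_pow {q D : ℕ} [NeZero q] (hq : q ≤ 2 ^ D) (a : ZMod q) :
    ∑ i : Fin D, (if a.val.testBit i then 1 else 0 : ZMod q) * 2 ^ (i : ℕ) = a := by
  calc _ = ((∑ i : Fin D, (a.val.testBit i).toNat * 2 ^ (i : ℕ) : ℕ) : ZMod q) := by
        push_cast
        refine sum_congr rfl fun i _ => ?_
        cases a.val.testBit i <;> simp
    _ = a := by
        rw [Fin.sum_univ_eq_sum_range (fun i => (a.val.testBit i).toNat * 2 ^ i),
          Nat.sum_range_testBit_mul_two_pow, Nat.mod_eq_of_lt (a.val_lt.trans_le hq),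
          ZMod.natCast_zmod_val]

namespace Matrix

variable {m n k : Type*} [Fintype n]

def bitDecomp (D : ℕ) {q : ℕ} (C : Matrix m n (ZMod q)) : Matrix m (n × Fin D) (ZMod q) :=
  of fun i p => if (C i p.1).val.testBit p.2 then 1 else 0

def gadget (D : ℕ) {R : Type*} [Semiring R] (S : Matrix n k R) : Matrix (n × Fin D) k R :=
  of fun p j => 2 ^ (p.2 : ℕ) * S p.1 j

theorem bitDecomp_mul_gadget {q D : ℕ} [NeZero q] (hq : q ≤ 2 ^ D) (C : Matrix m n (ZMod q))
    (S : Matrix n k (ZMod q)) : bitDecomp D C * gadget D S = C * S := by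
  ext i j
  simp only [mul_apply, bitDecomp, gadget, of_apply, Fintype.sum_prod_type]
  refine sum_congr rfl fun l _ => ?_
  simp_rw [← mul_assoc, ← sum_mul, ZMod.sum_testBit_val_mul_two_pow hq]

end Matrix

/-- Update invariance of decryption up to error: with `B_{e+1} = A·S_{e+1} + E`
and the updated ciphertext built from the key-switching token, one has
`C_{e+1,2} − C_{e+1,1}·S_{e+1} = C_{e,2} − C_{e,1}·S_e + Error` over
`ℤ_q`, `q = 2^D`. -/
theorem ue_update_invariance (D n nb mb : ℕ)
    (A : Matrix (Fin n) (Fin n) (ZMod (2 ^ D)))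
    (Se Se1 E : Matrix (Fin n) (Fin nb) (ZMod (2 ^ D)))
    (C1 : Matrix (Fin mb) (Fin n) (ZMod (2 ^ D)))
    (C2 : Matrix (Fin mb) (Fin nb) (ZMod (2 ^ D)))
    (S1 E1 : Matrix (Fin n × Fin D) (Fin n) (ZMod (2 ^ D)))
    (E1'' : Matrix (Fin n × Fin D) (Fin nb) (ZMod (2 ^ D)))
    (S2 E2 : Matrix (Fin n) (Fin n) (ZMod (2 ^ D)))
    (E2'' : Matrix (Fin n) (Fin nb) (ZMod (2 ^ D)))
    (R : Matrix (Fin mb) (Fin n) (ZMod (2 ^ D))) :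
    -- `O = Ord(C_{e,1})` is the bit-decomposition, `G = ⊗_D(S_e)` the gadget
    -- expansion, `Be1 = A·S_{e+1} + E` the next public key.
    let O : Matrix (Fin mb) (Fin n × Fin D) (ZMod (2 ^ D)) :=
      Matrix.of fun i p =>
        if Nat.testBit (C1 i p.1).val (p.2 : ℕ) then 1 else 0
    let G : Matrix (Fin n × Fin D) (Fin nb) (ZMod (2 ^ D)) :=
      Matrix.of fun p j => (2 : ZMod (2 ^ D)) ^ (p.2 : ℕ) * Se p.1 j
    let Be1 := A * Se1 + E
    (C2 + (O * (S1 * Be1 + E1'' - G)) + (R * (S2 * Be1 + E2'')))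
        - ((O * (S1 * A + E1)) + (R * (S2 * A + E2))) * Se1
      = C2 - C1 * Se +
        ((O * S1 + R * S2) * E - (O * E1 + R * E2) * Se1
          + O * E1'' + R * E2'') := by
  intro O G Be1
  have hOG : O * G = C1 * Se := Matrix.bitDecomp_mul_gadget le_rfl C1 Se
  simp only [Be1, Matrix.mul_add, Matrix.add_mul, Matrix.mul_sub, hOG,
    ← Matrix.mul_assoc]
  abel
end
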